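/- arXiv:1211.0487 — 2 statements merged into one kernel-verified Lean document; each statement's English description precedes it below -/
import Mathlib

section
/- Let g be a real Lie algebra and α : g → g* a linear map. Write p(x,y) = ½(α(x)(y) + α(y)(x)) for its symmetric part and ω(x,y) = ½(α(x)(y) − α(y)(x)) for its skew-symmetric part. Then α is a 1-cocycle for the coadjoint action, i.e. α([x,y])(z) = α(x)([y,z]) − α(y)([x,z]) for all x, y, z ∈ g, if and only if p is exact with potential ω, i.e. p([x,y],z) = ω([x,y],z) + ω([y,z],x) + ω([z,x],y) for all x, y, z ∈ g. (In words: a g*-valued 1-cocycle on g for the coadjoint action is the same thing as an exact invariant symmetric bilinear form on g.) -/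
/-- A linear map `α : g → g*` is a 1-cocycle for the coadjoint action
iff its symmetric part `p` is exact with potential its skew-symmetric part `ω`,
i.e. `p([x,y],z) = ω([x,y],z) + ω([y,z],x) + ω([z,x],y)`. -/
theorem coadjoint_one_cocycle_iff_symmetric_part_exact
    (g : Type*) [LieRing g] [LieAlgebra ℝ g]
    (α : g →ₗ[ℝ] Module.Dual ℝ g)
    (p ω : g → g → ℝ)
    (hp : ∀ x y : g, p x y = (α x y + α y x) / 2)
    (hω : ∀ x y : g, ω x y = (α x y - α y x) / 2) :
    (∀ x y z : g, α ⁅x, y⁆ z = α x ⁅y, z⁆ - α y ⁅x, z⁆) ↔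
    (∀ x y z : g, p ⁅x, y⁆ z = ω ⁅x, y⁆ z + ω ⁅y, z⁆ x + ω ⁅z, x⁆ y) := by
  constructor
  · intro h x y z
    rw [hp, hω, hω, hω]
    have h2 := h y z x
    have h3 := h z x y
    have a1 : α z ⁅y, x⁆ = - α z ⁅x, y⁆ := by rw [← lie_skew x y, map_neg, neg_neg]
    have a2 : α x ⁅z, y⁆ = - α x ⁅y, z⁆ := by rw [← lie_skew y z, map_neg, neg_neg]
    linarith
  · intro h
    have hC : ∀ x y z : g, α ⁅x, y⁆ z - α x ⁅y, z⁆ + α y ⁅x, z⁆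
        = -(α ⁅y, z⁆ x - α y ⁅z, x⁆ + α z ⁅y, x⁆) := by
      intro x y z
      have hE := h z x y
      rw [hp, hω, hω, hω] at hE
      have a1 : α z ⁅y, x⁆ = - α z ⁅x, y⁆ := by rw [← lie_skew x y, map_neg, neg_neg]
      have a2 : α x ⁅z, y⁆ = - α x ⁅y, z⁆ := by rw [← lie_skew y z, map_neg, neg_neg]
      have a3 : α y ⁅z, x⁆ = - α y ⁅x, z⁆ := by rw [← lie_skew x z, map_neg, neg_neg]
      linarith
    intro x y z
    have c1 := hC x y z
    have c2 := hC y z x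
    have c3 := hC z x y
    have a1 : α z ⁅y, x⁆ = - α z ⁅x, y⁆ := by rw [← lie_skew x y, map_neg, neg_neg]
    have a2 : α x ⁅z, y⁆ = - α x ⁅y, z⁆ := by rw [← lie_skew y z, map_neg, neg_neg]
    have a3 : α y ⁅x, z⁆ = - α y ⁅z, x⁆ := by rw [← lie_skew z x, map_neg, neg_neg]
    linarith
end

section
/- Let g be a real Lie algebra and let λ : g → g* be a linear map which is a 1-cocycle for the coadjoint action, i.e. λ([x,y])(z) = λ(x)([y,z]) − λ(y)([x,z]) for all x, y, z ∈ g. On the underlying Lie algebra of the cone Cg, namely the semidirect product g ⋉ g with bracket [(x,y),(x',y')] = ([x,x'], [x,y'] − [x',y]), the bilinear map σ((x,y),(x',y')) = λ(x)(y') − λ(x')(y) is a real-valued Lie algebra 2-cocycle: it is alternating and σ([a,b],c) + σ([b,c],a) + σ([c,a],b) = 0 for all a, b, c ∈ g ⋉ g. (This is the 2-cocycle defining the one-dimensional central extension of the cone Cg by ℝ[1] associated to a class in H¹_{ad*}(g,g*).) -/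
/-- If `λ : g → g*` is a 1-cocycle for the coadjoint action, then on the
underlying Lie algebra of the cone `Cg` (the semidirect product `g ⋉ g` with bracket
`[(x,y),(x',y')] = ([x,x'], [x,y'] − [x',y])`), the bilinear map
`σ((x,y),(x',y')) = λ(x)(y') − λ(x')(y)` is a real-valued Lie algebra 2-cocycle:
it is alternating and its cyclic sum over the bracket vanishes. -/
theorem cone_central_extension_two_cocycle
    (g : Type*) [LieRing g] [LieAlgebra ℝ g]
    (lam : g →ₗ[ℝ] Module.Dual ℝ g)
    (hcoc : ∀ x y z : g, lam ⁅x, y⁆ z = lam x ⁅y, z⁆ - lam y ⁅x, z⁆)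
    (br : g × g → g × g → g × g)
    (hbr : ∀ a b : g × g, br a b = (⁅a.1, b.1⁆, ⁅a.1, b.2⁆ - ⁅b.1, a.2⁆))
    (σ : g × g → g × g → ℝ)
    (hσ : ∀ a b : g × g, σ a b = lam a.1 b.2 - lam b.1 a.2) :
    (∀ a : g × g, σ a a = 0) ∧
    (∀ a b c : g × g, σ (br a b) c + σ (br b c) a + σ (br c a) b = 0) := by
  constructor
  · intro a; simp [hσ]
  · intro a b c
    simp only [hσ, hbr, hcoc, map_sub, LinearMap.sub_apply]
    ring
end
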